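/- A normalized n-partite amplitude tensor a is separable if and only if for every party k, all 2×2 minors of the k-th flattening M_k vanish; that is, for all row indices I, J and all column indices s, t, one has M_k(I, s) * M_k(J, t) − M_k(I, t) * M_k(J, s) = 0. -/

import Mathlib

open Matrix

noncomputable section

/-- Insert `j` at position `k` into the partial index tuple `I`, producing a full index tuple. -/
def insertAt {n : ℕ} {d : Fin n → ℕ} (k : Fin n)
    (I : ∀ s : {s : Fin n // s ≠ k}, Fin (d s)) (j : Fin (d k)) :
    ∀ t : Fin n, Fin (d t) :=
  fun t => if h : t = k then Fin.cast (congrArg d h).symm j else I ⟨t, h⟩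

/-- The `k`-th flattening of an `n`-partite amplitude tensor `a`. -/
def flatten {n : ℕ} {d : Fin n → ℕ} (a : (∀ t : Fin n, Fin (d t)) → ℂ) (k : Fin n) :
    Matrix (∀ s : {s : Fin n // s ≠ k}, Fin (d s)) (Fin (d k)) ℂ :=
  fun I j => a (insertAt k I j)

/-- An `n`-partite amplitude tensor is separable if it is a product of local vectors. -/
def Separable {n : ℕ} {d : Fin n → ℕ} (a : (∀ t : Fin n, Fin (d t)) → ℂ) : Prop :=
  ∃ f : ∀ k : Fin n, Fin (d k) → ℂ, ∀ i, a i = ∏ k : Fin n, f k (i k)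

/-- An `n`-partite amplitude tensor is normalized if the squared amplitudes sum to 1. -/
def Normalized {n : ℕ} {d : Fin n → ℕ} (a : (∀ t : Fin n, Fin (d t)) → ℂ) : Prop :=
  ∑ i : ∀ t : Fin n, Fin (d t), ‖a i‖ ^ 2 = 1

/-!
If `a i₀ ≠ 0`, the vanishing of the `2 × 2` minor of `M_k` on the rows through `i` and `i₀` reads
`a i * a i₀ = a (i with i k reset to i₀ k) * a (i₀ with i₀ k replaced by i k)`.
Resetting the coordinates of `i` to those of `i₀` one at a time gives
`a i * a i₀ ^ n = a i₀ * ∏ k, a (i₀ with i₀ k replaced by i k)`, a product of local vectors up to a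
scalar, which is absorbed into one factor. If `a` vanishes identically it is trivially separable.
-/

open Function Finset

section Tensor

variable {ι : Type*} [DecidableEq ι] {α : ι → Type*}

/-- The `2 × 2` minors of every flattening vanish, rows being indexed by full tuples `i`, `i'`
whose `k`-th entry is ignored. -/
def MinorsVanish {M : Type*} [Mul M] (a : (∀ k, α k) → M) : Prop :=
  ∀ k (i i' : ∀ k, α k) (s t : α k),
    a (update i k s) * a (update i' k t) = a (update i k t) * a (update i' k s)

theorem mul_pow_card_eq_mul_prod_update_of_minorsVanish {M : Type*} [CommMonoid M]
    {a : (∀ k, α k) → M}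
    (hmin : MinorsVanish a)
    (i₀ : ∀ k, α k) (S : Finset ι) (i : ∀ k, α k) (hi : ∀ k ∉ S, i k = i₀ k) :
    a i * a i₀ ^ #S = a i₀ * ∏ k ∈ S, a (update i₀ k (i k)) := by
  induction S using Finset.induction_on generalizing i with
  | empty =>
    obtain rfl : i = i₀ := funext fun k => hi k (notMem_empty k)
    simp
  | insert k S hk ih =>
    have hi' : ∀ j ∉ S, update i k (i₀ k) j = i₀ j := by
      intro j hj
      by_cases hjk : j = k
      · subst hjk; exact update_self ..
      · rw [update_of_ne hjk]; exact hi j (by simp [hjk, hj])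
    have hreset : a i * a i₀ = a (update i k (i₀ k)) * a (update i₀ k (i k)) := by
      simpa using hmin k i i₀ (i k) (i₀ k)
    have hprod : ∏ j ∈ S, a (update i₀ j (update i k (i₀ k) j)) =
        ∏ j ∈ S, a (update i₀ j (i j)) :=
      prod_congr rfl fun j hj => by rw [update_of_ne (ne_of_mem_of_not_mem hj hk)]
    calc a i * a i₀ ^ #(insert k S)
        = a i * a i₀ * a i₀ ^ #S := by rw [card_insert_of_notMem hk, pow_succ', mul_assoc]
      _ = a (update i k (i₀ k)) * a i₀ ^ #S * a (update i₀ k (i k)) := by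
        rw [hreset, mul_right_comm]
      _ = a i₀ * ∏ j ∈ insert k S, a (update i₀ j (i j)) := by
        rw [ih _ hi', hprod, prod_insert hk]; ac_rfl

variable [Fintype ι]

theorem minorsVanish_of_eq_prod {M : Type*} [CommMonoid M] {a : (∀ k, α k) → M}
    {f : ∀ k, α k → M} (hf : ∀ i, a i = ∏ k, f k (i k)) : MinorsVanish a := by
  intro k i i' s t
  have hupdate : ∀ (i : ∀ k, α k) (s : α k),
      a (update i k s) = f k s * ∏ u ∈ univ.erase k, f u (i u) := by
    intro i s
    rw [hf, ← mul_prod_erase univ _ (mem_univ k), update_self]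
    congr 1
    exact prod_congr rfl fun u hu => by rw [update_of_ne (ne_of_mem_erase hu)]
  simp only [hupdate]
  ac_rfl

theorem exists_eq_const_mul_prod_of_minorsVanish {K : Type*} [Field K] {a : (∀ k, α k) → K}
    (hmin : MinorsVanish a) :
    ∃ (c : K) (g : ∀ k, α k → K), ∀ i, a i = c * ∏ k, g k (i k) := by
  by_cases hzero : ∀ i, a i = 0
  · exact ⟨0, fun _ _ => 1, fun i => by simp [hzero i]⟩
  push Not at hzero
  obtain ⟨i₀, hi₀⟩ := hzero
  refine ⟨a i₀, fun k j => a (update i₀ k j) / a i₀, fun i => ?_⟩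
  have key := mul_pow_card_eq_mul_prod_update_of_minorsVanish hmin i₀ univ i (by simp)
  rw [prod_div_distrib, prod_const, card_univ, mul_div_assoc', eq_div_iff (pow_ne_zero _ hi₀)]
  exact key

theorem exists_eq_prod_of_eq_const_mul_prod [Nonempty ι] {M : Type*} [CommMonoid M]
    {a : (∀ k, α k) → M} {c : M} {g : ∀ k, α k → M} (h : ∀ i, a i = c * ∏ k, g k (i k)) :
    ∃ f : ∀ k, α k → M, ∀ i, a i = ∏ k, f k (i k) := by
  obtain ⟨k₀⟩ := ‹Nonempty ι›
  refine ⟨fun k j => (if k = k₀ then c else 1) * g k j, fun i => ?_⟩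
  rw [prod_mul_distrib, prod_ite_eq' univ k₀, if_pos (mem_univ k₀), h]

end Tensor

section Flattening

variable {n : ℕ} {d : Fin n → ℕ}

lemma insertAt_self (k : Fin n) (I : ∀ s : {s : Fin n // s ≠ k}, Fin (d s)) (j : Fin (d k)) :
    insertAt k I j k = j := by
  simp only [insertAt]
  rfl

lemma insertAt_ne (k : Fin n) (I : ∀ s : {s : Fin n // s ≠ k}, Fin (d s)) (j : Fin (d k))
    {t : Fin n} (h : t ≠ k) :
    insertAt k I j t = I ⟨t, h⟩ := by
  simp [insertAt, h]

lemma insertAt_restrict (k : Fin n) (i : ∀ t : Fin n, Fin (d t)) (j : Fin (d k)) :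
    insertAt k (fun s : {s : Fin n // s ≠ k} => i s.1) j = update i k j := by
  funext t
  by_cases h : t = k
  · subst h
    rw [update_self, insertAt_self]
  · rw [update_of_ne h, insertAt_ne k _ _ h]

lemma insertAt_eq_update (k : Fin n) (I : ∀ s : {s : Fin n // s ≠ k}, Fin (d s))
    (j j' : Fin (d k)) :
    insertAt k I j = update (insertAt k I j') k j := by
  have hI : (fun s : {s : Fin n // s ≠ k} => insertAt k I j' s.1) = I :=
    funext fun s => insertAt_ne k I j' s.2
  rw [← insertAt_restrict, hI]

lemma flatten_eq_apply_update (a : (∀ t : Fin n, Fin (d t)) → ℂ) (k : Fin n)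
    (I : ∀ s : {s : Fin n // s ≠ k}, Fin (d s)) (j j' : Fin (d k)) :
    flatten a k I j = a (update (insertAt k I j') k j) := by
  rw [flatten, ← insertAt_eq_update]

theorem flatten_minors_iff (a : (∀ t : Fin n, Fin (d t)) → ℂ) :
    (∀ k : Fin n, ∀ I J : ∀ s : {s : Fin n // s ≠ k}, Fin (d s), ∀ s t : Fin (d k),
        flatten a k I s * flatten a k J t - flatten a k I t * flatten a k J s = 0) ↔
      MinorsVanish a := by
  simp only [sub_eq_zero]
  constructor
  · intro h k i i' s t
    simpa only [flatten, insertAt_restrict] using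
      h k (fun u : {u : Fin n // u ≠ k} => i u.1) (fun u : {u : Fin n // u ≠ k} => i' u.1) s t
  · intro h k I J s t
    simp only [flatten_eq_apply_update a k _ _ s]
    exact h k _ _ s t

end Flattening

theorem separable_iff_minors_general {n : ℕ} (hn : 1 ≤ n) (d : Fin n → ℕ)
    (a : (∀ t : Fin n, Fin (d t)) → ℂ) :
    Separable a ↔
      ∀ k : Fin n, ∀ I J : ∀ s : {s : Fin n // s ≠ k}, Fin (d s), ∀ s t : Fin (d k),
        flatten a k I s * flatten a k J t - flatten a k I t * flatten a k J s = 0 := by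
  have : Nonempty (Fin n) := ⟨⟨0, hn⟩⟩
  rw [flatten_minors_iff]
  constructor
  · rintro ⟨f, hf⟩
    exact minorsVanish_of_eq_prod hf
  · intro hmin
    obtain ⟨c, g, hcg⟩ := exists_eq_const_mul_prod_of_minorsVanish hmin
    exact exists_eq_prod_of_eq_const_mul_prod hcg

/-- Corollary 1: separability iff all 2×2 minors of every flattening `M_k` vanish. -/
theorem separable_iff_minors {n : ℕ} (hn : 1 ≤ n) (d : Fin n → ℕ) (hd : ∀ k, 1 ≤ d k)
    (a : (∀ t : Fin n, Fin (d t)) → ℂ) (ha : Normalized a) :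
    Separable a ↔
      ∀ k : Fin n, ∀ I J : ∀ s : {s : Fin n // s ≠ k}, Fin (d s), ∀ s t : Fin (d k),
        flatten a k I s * flatten a k J t - flatten a k I t * flatten a k J s = 0 :=
  separable_iff_minors_general hn d a
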